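/- Under the Dawid–Skene model with a decomposable aggregation rule: if t̃ ≤ 0, then the mean error rate satisfies E[E_N] ≥ 1 − min{ exp(−t̃²/2), exp(−t̃²/(2·(σ² − c·t̃/3))) }. -/

import Mathlib

open MeasureTheory ProbabilityTheory Real

noncomputable section

namespace CrowdDS

/-- Conditional law of the label `Z i j` (valued in `Fin (L+1)`, `0` = missing) given the
true label `y j = k`, under the general Dawid–Skene model with assignment probabilities `q`
and confusion matrices `p` (where `p i k h` is the probability of reporting label `h.succ`
given true label `k`). -/
def condLaw {M N L : ℕ} (q : Fin M → Fin N → ℝ) (p : Fin M → Fin L → Fin L → ℝ)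
    (i : Fin M) (j : Fin N) (k : Fin L) (h : Fin (L + 1)) : ℝ :=
  if hz : h = 0 then 1 - q i j else q i j * p i k (h.pred hz)

/-- The normalizing quantity `N̄`. -/
def nbar {M L : ℕ} (f : Fin M → Fin L → Fin (L + 1) → ℝ) : ℝ :=
  Real.sqrt (∑ i, (sSup {x : ℝ | ∃ k l h : Fin L, k ≠ l ∧
    x = |f i k h.succ - f i l h.succ|}) ^ 2)

/-- Expected gap `Δ_j(k,l)` of the aggregated scores. -/
def gap {M N L : ℕ} (f : Fin M → Fin L → Fin (L + 1) → ℝ) (a : Fin L → ℝ)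
    (q : Fin M → Fin N → ℝ) (p : Fin M → Fin L → Fin L → ℝ)
    (j : Fin N) (k l : Fin L) : ℝ :=
  (∑ i, ∑ h : Fin L, q i j * (f i k h.succ - f i l h.succ) * p i k h) + (a k - a l)

/-- `τ_j^min`. -/
def tauMin {M N L : ℕ} (f : Fin M → Fin L → Fin (L + 1) → ℝ) (a : Fin L → ℝ)
    (q : Fin M → Fin N → ℝ) (p : Fin M → Fin L → Fin L → ℝ) (j : Fin N) : ℝ :=
  sInf {x : ℝ | ∃ k l : Fin L, k ≠ l ∧ x = gap f a q p j k l / nbar f}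

/-- `τ_j^max`. -/
def tauMax {M N L : ℕ} (f : Fin M → Fin L → Fin (L + 1) → ℝ) (a : Fin L → ℝ)
    (q : Fin M → Fin N → ℝ) (p : Fin M → Fin L → Fin L → ℝ) (j : Fin N) : ℝ :=
  sSup {x : ℝ | ∃ k l : Fin L, k ≠ l ∧ x = gap f a q p j k l / nbar f}

/-- `t̄ = min_j τ_j^min`. -/
def tbar {M N L : ℕ} (f : Fin M → Fin L → Fin (L + 1) → ℝ) (a : Fin L → ℝ)
    (q : Fin M → Fin N → ℝ) (p : Fin M → Fin L → Fin L → ℝ) : ℝ :=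
  sInf {x : ℝ | ∃ j : Fin N, x = tauMin f a q p j}

/-- `t̃ = max_j τ_j^max`. -/
def ttil {M N L : ℕ} (f : Fin M → Fin L → Fin (L + 1) → ℝ) (a : Fin L → ℝ)
    (q : Fin M → Fin N → ℝ) (p : Fin M → Fin L → Fin L → ℝ) : ℝ :=
  sSup {x : ℝ | ∃ j : Fin N, x = tauMax f a q p j}

/-- The constant `c`. -/
def cConst {M L : ℕ} (f : Fin M → Fin L → Fin (L + 1) → ℝ) : ℝ :=
  (1 / nbar f) * sSup {x : ℝ | ∃ (i : Fin M) (k l h : Fin L), k ≠ l ∧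
    x = |f i k h.succ - f i l h.succ|}

/-- The variance proxy `σ²`. -/
def sigmaSq {M N L : ℕ} (f : Fin M → Fin L → Fin (L + 1) → ℝ)
    (q : Fin M → Fin N → ℝ) (p : Fin M → Fin L → Fin L → ℝ) : ℝ :=
  (1 / (nbar f) ^ 2) * sSup {x : ℝ | ∃ (j : Fin N) (k l : Fin L), k ≠ l ∧
    x = ∑ i, ∑ h : Fin L, q i j * (f i k h.succ - f i l h.succ) ^ 2 * p i k h}

/-- The error rate `E_N`. -/
def errRate {Ω : Type*} {N L : ℕ} (y yhat : Fin N → Ω → Fin L) (ω : Ω) : ℝ :=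
  (N : ℝ)⁻¹ * ∑ j, if yhat j ω ≠ y j ω then (1 : ℝ) else 0

/-- `φ(x) = exp(−x²/2)`. -/
def phi (x : ℝ) : ℝ := Real.exp (-x ^ 2 / 2)

/-- Kullback–Leibler divergence between Bernoulli distributions. -/
def klBer (x y : ℝ) : ℝ := x * Real.log (x / y) + (1 - x) * Real.log ((1 - x) / (1 - y))

end CrowdDS

/-!
Fix an item `j` and, for every label `k`, another label `l k ≠ k`. If item `j` is labelled
correctly and its true label is `k`, the score `s_j(k)` is at least `s_j(l k)`, i.e. the sum over
the workers of `f i k (Z i j) - f i (l k) (Z i j)` is at least `a (l k) - a k`. Given `y j = k` the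
summands are independent and bounded, and their total mean `Δ_j(k, l k) - (a k - a (l k))` lies
below that threshold by at least `τ = -t̃ N̄`. Hoeffding's and Bernstein's inequalities bound the
probability of such a deviation by `exp (-t̃²/2)` and `exp (-t̃²/(2 (σ² - c t̃/3)))` respectively.
Averaging over `k` with the prior gives `P(ŷ_j = y_j) ≤ min {…}`, and averaging `P(ŷ_j ≠ y_j)`
over the items gives the bound on `E[E_N]`.
-/

lemma exp_sub_one_sub_le_of_abs_le {u s : ℝ} (hus : |u| ≤ s) (hs : s < 3) :
    exp u - 1 - u ≤ u ^ 2 / (2 * (1 - s / 3)) := by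
  have hs0 : 0 ≤ s := (abs_nonneg u).trans hus
  have hexp : HasSum (fun n => u ^ (n + 2) / (n + 2).factorial) (exp u - 1 - u) := by
    have := (hasSum_nat_add_iff' 2).2 (NormedSpace.expSeries_div_hasSum_exp u)
    simpa [Finset.sum_range_succ, ← Real.exp_eq_exp_ℝ, sub_sub] using this
  have hgeom : HasSum (fun n => u ^ 2 / 2 * (s / 3) ^ n) (u ^ 2 / 2 * (1 - s / 3)⁻¹) :=
    (hasSum_geometric_of_lt_one (by positivity) (by linarith)).mul_left _
  have hterm (n : ℕ) : u ^ (n + 2) / (n + 2).factorial ≤ u ^ 2 / 2 * (s / 3) ^ n := by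
    have hfact : (2 * 3 ^ n : ℝ) ≤ (n + 2).factorial := by
      rw [add_comm n]
      exact_mod_cast Nat.factorial_mul_pow_le_factorial (m := 2) (n := n)
    calc u ^ (n + 2) / (n + 2).factorial ≤ u ^ 2 * s ^ n / (2 * 3 ^ n) := by
          gcongr ?_ / ?_
          · calc u ^ (n + 2) ≤ |u| ^ (n + 2) := by rw [pow_abs]; exact le_abs_self _
              _ = u ^ 2 * |u| ^ n := by rw [pow_add, mul_comm, sq_abs]
              _ ≤ u ^ 2 * s ^ n := by gcongr
      _ = u ^ 2 / 2 * (s / 3) ^ n := by rw [div_pow]; ring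
  calc exp u - 1 - u ≤ u ^ 2 / 2 * (1 - s / 3)⁻¹ := hasSum_le hterm hexp hgeom
    _ = u ^ 2 / (2 * (1 - s / 3)) := by field_simp

section FiniteDistribution

variable {α : Type*} [Fintype α]

lemma integral_sum_ofReal_smul_dirac [MeasurableSpace α] [MeasurableSingletonClass α]
    {w : α → ℝ} (hw : ∀ x, 0 ≤ w x) (g : α → ℝ) :
    ∫ x, g x ∂(∑ x, ENNReal.ofReal (w x) • Measure.dirac x) = ∑ x, w x * g x := by
  rw [integral_finsetSum_measure fun x _ =>
    (integrable_dirac enorm_lt_top).smul_measure ENNReal.ofReal_ne_top]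
  simp [integral_smul_measure, integral_dirac, ENNReal.toReal_ofReal (hw _)]

lemma sum_mul_exp_le_of_mem_Icc {w : α → ℝ} (hw0 : ∀ x, 0 ≤ w x) (hw1 : ∑ x, w x = 1)
    {X : α → ℝ} {a b : ℝ} (hX : ∀ x, X x ∈ Set.Icc a b) (t : ℝ) :
    ∑ x, w x * exp (t * X x) ≤ exp (t * ∑ x, w x * X x + t ^ 2 * (b - a) ^ 2 / 8) := by
  let _ : MeasurableSpace α := ⊤
  set ν : Measure α := ∑ x, ENNReal.ofReal (w x) • Measure.dirac x
  have : IsProbabilityMeasure ν := ⟨by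
    simp [ν, ← ENNReal.ofReal_sum_of_nonneg fun x _ => hw0 x, hw1]⟩
  have h := (hasSubgaussianMGF_of_mem_Icc (μ := ν) (X := X) (measurable_of_finite X).aemeasurable
    (ae_of_all _ hX)).mgf_le t
  simp only [mgf] at h
  rw [integral_sum_ofReal_smul_dirac hw0, integral_sum_ofReal_smul_dirac hw0] at h
  have hc : ((‖b - a‖₊ / 2) ^ 2 : NNReal) * t ^ 2 / 2 = t ^ 2 * (b - a) ^ 2 / 8 := by
    push_cast [coe_nnnorm, Real.norm_eq_abs, div_pow, sq_abs]; ring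
  have hshift : ∑ x, w x * exp (t * X x)
      = exp (t * ∑ x, w x * X x) * ∑ x, w x * exp (t * (X x - ∑ x, w x * X x)) := by
    rw [Finset.mul_sum]
    refine Finset.sum_congr rfl fun x _ => ?_
    rw [mul_left_comm, ← exp_add]
    ring_nf
  rw [hshift, exp_add, ← hc]
  gcongr

lemma sum_mul_exp_le_of_abs_le {w : α → ℝ} (hw0 : ∀ x, 0 ≤ w x) (hw1 : ∑ x, w x = 1)
    {X : α → ℝ} {c t : ℝ} (hX : ∀ x, |X x| ≤ c) (ht : 0 ≤ t) (htc : t * c < 3) :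
    ∑ x, w x * exp (t * X x)
      ≤ exp (t * ∑ x, w x * X x + t ^ 2 * (∑ x, w x * X x ^ 2) / (2 * (1 - t * c / 3))) := by
  have hpoint (x : α) : exp (t * X x) ≤ 1 + t * X x + t ^ 2 * X x ^ 2 / (2 * (1 - t * c / 3)) := by
    have habs : |t * X x| ≤ t * c := by
      rw [abs_mul, abs_of_nonneg ht]
      exact mul_le_mul_of_nonneg_left (hX x) ht
    have := exp_sub_one_sub_le_of_abs_le habs htc
    rw [mul_pow] at this
    linarith
  calc ∑ x, w x * exp (t * X x)
      ≤ ∑ x, w x * (1 + t * X x + t ^ 2 * X x ^ 2 / (2 * (1 - t * c / 3))) := by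
        gcongr with x
        · exact hw0 x
        · exact hpoint x
    _ = ∑ x, (w x + t * (w x * X x) + t ^ 2 / (2 * (1 - t * c / 3)) * (w x * X x ^ 2)) :=
        Finset.sum_congr rfl fun x _ => by ring
    _ = t * ∑ x, w x * X x + t ^ 2 * (∑ x, w x * X x ^ 2) / (2 * (1 - t * c / 3)) + 1 := by
        rw [Finset.sum_add_distrib, Finset.sum_add_distrib, ← Finset.mul_sum, ← Finset.mul_sum, hw1]
        ring
    _ ≤ _ := add_one_le_exp _

variable {ι : Type*} [Fintype ι] [DecidableEq ι]

lemma sum_filter_prod_le_exp_mul_prod {w X : ι → α → ℝ} (hw0 : ∀ i x, 0 ≤ w i x) {t : ℝ}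
    (ht : 0 ≤ t) (τ : ℝ) :
    ∑ h ∈ Finset.univ.filter (fun h : ι → α => τ ≤ ∑ i, X i (h i)), ∏ i, w i (h i)
      ≤ exp (-(t * τ)) * ∏ i, ∑ x, w i x * exp (t * X i x) := by
  have hweight (h : ι → α) : 0 ≤ ∏ i, w i (h i) := Finset.prod_nonneg fun i _ => hw0 i (h i)
  calc ∑ h ∈ Finset.univ.filter (fun h : ι → α => τ ≤ ∑ i, X i (h i)), ∏ i, w i (h i)
      ≤ ∑ h ∈ Finset.univ.filter (fun h : ι → α => τ ≤ ∑ i, X i (h i)),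
          (∏ i, w i (h i)) * exp (t * (∑ i, X i (h i) - τ)) := by
        refine Finset.sum_le_sum fun h hh => le_mul_of_one_le_right (hweight h) (one_le_exp ?_)
        exact mul_nonneg ht (sub_nonneg.2 (Finset.mem_filter.1 hh).2)
    _ ≤ ∑ h : ι → α, (∏ i, w i (h i)) * exp (t * (∑ i, X i (h i) - τ)) :=
        Finset.sum_le_sum_of_subset_of_nonneg (Finset.filter_subset _ _)
          fun h _ _ => mul_nonneg (hweight h) (exp_nonneg _)
    _ = exp (-(t * τ)) * ∏ i, ∑ x, w i x * exp (t * X i x) := by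
        rw [Finset.prod_univ_sum, Fintype.piFinset_univ, Finset.mul_sum]
        refine Finset.sum_congr rfl fun h _ => ?_
        rw [mul_sub, sub_eq_neg_add, exp_add, Finset.mul_sum, exp_sum, Finset.prod_mul_distrib]
        ring

lemma sum_filter_prod_le_exp_of_mgf_le {w D : ι → α → ℝ} (hw0 : ∀ i x, 0 ≤ w i x) {t : ℝ}
    (ht : 0 ≤ t) {g : ι → ℝ}
    (hmgf : ∀ i, ∑ x, w i x * exp (t * D i x) ≤ exp (t * ∑ x, w i x * D i x + g i))
    {τ₀ τ : ℝ} (hgap : ∑ i, ∑ x, w i x * D i x + τ ≤ τ₀) :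
    ∑ h ∈ Finset.univ.filter (fun h : ι → α => τ₀ ≤ ∑ i, D i (h i)), ∏ i, w i (h i)
      ≤ exp (-(t * τ) + ∑ i, g i) := by
  calc _ ≤ exp (-(t * τ₀)) * ∏ i, ∑ x, w i x * exp (t * D i x) :=
        sum_filter_prod_le_exp_mul_prod hw0 ht τ₀
    _ ≤ exp (-(t * τ₀)) * ∏ i, exp (t * ∑ x, w i x * D i x + g i) := by
        refine mul_le_mul_of_nonneg_left (Finset.prod_le_prod (fun i _ => ?_) fun i _ => hmgf i)
          (exp_nonneg _)
        exact Finset.sum_nonneg fun x _ => mul_nonneg (hw0 i x) (exp_nonneg _)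
    _ = exp (-(t * (τ₀ - ∑ i, ∑ x, w i x * D i x)) + ∑ i, g i) := by
        rw [← exp_sum, ← exp_add, Finset.sum_add_distrib, ← Finset.mul_sum]
        ring_nf
    _ ≤ exp (-(t * τ) + ∑ i, g i) := by
        gcongr
        linarith

lemma sum_filter_prod_le_hoeffding {w D : ι → α → ℝ} (hw0 : ∀ i x, 0 ≤ w i x)
    (hw1 : ∀ i, ∑ x, w i x = 1) {B : ι → ℝ} (hB : ∀ i x, |D i x| ≤ B i)
    (hS : 0 < ∑ i, B i ^ 2) {τ₀ τ : ℝ} (hτ : 0 ≤ τ)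
    (hgap : ∑ i, ∑ x, w i x * D i x + τ ≤ τ₀) :
    ∑ h ∈ Finset.univ.filter (fun h : ι → α => τ₀ ≤ ∑ i, D i (h i)), ∏ i, w i (h i)
      ≤ exp (-τ ^ 2 / (2 * ∑ i, B i ^ 2)) := by
  set S := ∑ i, B i ^ 2
  have ht : 0 ≤ τ / S := by positivity
  have hmgf (i : ι) := sum_mul_exp_le_of_mem_Icc (hw0 i) (hw1 i)
    (fun x => abs_le.1 (hB i x)) (τ / S)
  refine (sum_filter_prod_le_exp_of_mgf_le hw0 ht hmgf hgap).trans_eq ?_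
  congr 1
  simp only [sub_neg_eq_add, ← two_mul, mul_pow, ← Finset.mul_sum, ← Finset.sum_div]
  field_simp
  ring

lemma sum_filter_prod_le_bernstein_of_pos {w D : ι → α → ℝ} (hw0 : ∀ i x, 0 ≤ w i x)
    (hw1 : ∀ i, ∑ x, w i x = 1) {C V : ℝ} (hC : ∀ i x, |D i x| ≤ C) (hC0 : 0 ≤ C)
    (hV : ∑ i, ∑ x, w i x * D i x ^ 2 ≤ V) (hV0 : 0 < V) {τ₀ τ : ℝ} (hτ : 0 < τ)
    (hgap : ∑ i, ∑ x, w i x * D i x + τ ≤ τ₀) :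
    ∑ h ∈ Finset.univ.filter (fun h : ι → α => τ₀ ≤ ∑ i, D i (h i)), ∏ i, w i (h i)
      ≤ exp (-τ ^ 2 / (2 * (V + C * τ / 3))) := by
  obtain ⟨W, hW⟩ : ∃ W, W = V + C * τ / 3 := ⟨_, rfl⟩
  rw [← hW]
  have hW0 : 0 < W := by rw [hW]; positivity
  have ht : 0 ≤ τ / W := by positivity
  -- the choice `t = τ / W` makes `1 - t C / 3 = V / W`
  have hK : 1 - τ / W * C / 3 = V / W := by field_simp; linarith
  have htC : τ / W * C < 3 := by
    have : 0 < V / W := by positivity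
    linarith
  have hmgf (i : ι) := sum_mul_exp_le_of_abs_le (hw0 i) (hw1 i) (hC i) ht htC
  refine (sum_filter_prod_le_exp_of_mgf_le hw0 ht hmgf hgap).trans ?_
  rw [← Finset.sum_div, ← Finset.mul_sum, hK]
  calc exp (-(τ / W * τ) + (τ / W) ^ 2 * (∑ i, ∑ x, w i x * D i x ^ 2) / (2 * (V / W)))
      ≤ exp (-(τ / W * τ) + (τ / W) ^ 2 * V / (2 * (V / W))) := by gcongr
    _ = exp (-τ ^ 2 / (2 * W)) := by congr 1; field_simp; ring

lemma sum_filter_prod_le_bernstein {w D : ι → α → ℝ} (hw0 : ∀ i x, 0 ≤ w i x)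
    (hw1 : ∀ i, ∑ x, w i x = 1) {C V : ℝ} (hC : ∀ i x, |D i x| ≤ C) (hC0 : 0 < C)
    (hV : ∑ i, ∑ x, w i x * D i x ^ 2 ≤ V) {τ₀ τ : ℝ} (hτ : 0 < τ)
    (hgap : ∑ i, ∑ x, w i x * D i x + τ ≤ τ₀) :
    ∑ h ∈ Finset.univ.filter (fun h : ι → α => τ₀ ≤ ∑ i, D i (h i)), ∏ i, w i (h i)
      ≤ exp (-τ ^ 2 / (2 * (V + C * τ / 3))) := by
  have hV0 : 0 ≤ V := le_trans (Finset.sum_nonneg fun i _ => Finset.sum_nonneg fun x _ =>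
    mul_nonneg (hw0 i x) (sq_nonneg _)) hV
  -- `V = 0` is reached as a limit of the case `V > 0`
  have hcont : ContinuousAt (fun V' => exp (-τ ^ 2 / (2 * (V' + C * τ / 3)))) V := by
    have : 2 * (V + C * τ / 3) ≠ 0 := by positivity
    fun_prop (disch := assumption)
  refine ge_of_tendsto (hcont.tendsto.mono_left nhdsWithin_le_nhds)
    (eventually_nhdsWithin_of_forall (s := Set.Ioi V) fun V' hV' => ?_)
  exact sum_filter_prod_le_bernstein_of_pos hw0 hw1 hC hC0.le (hV.trans (le_of_lt hV'))
    (hV0.trans_lt hV') hτ hgap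

end FiniteDistribution

namespace CrowdDS

variable {M N L : ℕ}

-- In the paper's notation these are `maxₖ≠ₗ,ₕ |fᵢ(k,h) - fᵢ(l,h)|`, `c N̄` and `σ² N̄²`.
def scoreRange (f : Fin M → Fin L → Fin (L + 1) → ℝ) (i : Fin M) : ℝ :=
  sSup {x : ℝ | ∃ k l h : Fin L, k ≠ l ∧ x = |f i k h.succ - f i l h.succ|}

def maxScoreRange (f : Fin M → Fin L → Fin (L + 1) → ℝ) : ℝ :=
  sSup {x : ℝ | ∃ (i : Fin M) (k l h : Fin L), k ≠ l ∧ x = |f i k h.succ - f i l h.succ|}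

def maxScoreVar (f : Fin M → Fin L → Fin (L + 1) → ℝ) (q : Fin M → Fin N → ℝ)
    (p : Fin M → Fin L → Fin L → ℝ) : ℝ :=
  sSup {x : ℝ | ∃ (j : Fin N) (k l : Fin L), k ≠ l ∧
    x = ∑ i, ∑ h : Fin L, q i j * (f i k h.succ - f i l h.succ) ^ 2 * p i k h}

section ConditionalLaw

variable {q : Fin M → Fin N → ℝ} {p : Fin M → Fin L → Fin L → ℝ}

lemma condLaw_nonneg (hq0 : ∀ i j, 0 ≤ q i j) (hq1 : ∀ i j, q i j ≤ 1)
    (hp0 : ∀ i k h, 0 ≤ p i k h) (i : Fin M) (j : Fin N) (k : Fin L) (x : Fin (L + 1)) :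
    0 ≤ condLaw q p i j k x := by
  unfold condLaw
  split_ifs
  · linarith [hq1 i j]
  · exact mul_nonneg (hq0 i j) (hp0 i k _)

lemma sum_condLaw (hp1 : ∀ i k, ∑ h, p i k h = 1) (i : Fin M) (j : Fin N) (k : Fin L) :
    ∑ x, condLaw q p i j k x = 1 := by
  simp [condLaw, Fin.sum_univ_succ, ← Finset.mul_sum, hp1]

lemma sum_condLaw_mul_of_map_zero {i : Fin M} {j : Fin N} {k : Fin L} {g : Fin (L + 1) → ℝ}
    (hg : g 0 = 0) :
    ∑ x, condLaw q p i j k x * g x = ∑ h : Fin L, q i j * g h.succ * p i k h := by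
  simp [condLaw, Fin.sum_univ_succ, hg, mul_right_comm]

end ConditionalLaw

section Suprema

variable {f : Fin M → Fin L → Fin (L + 1) → ℝ} {a : Fin L → ℝ} {q : Fin M → Fin N → ℝ}
  {p : Fin M → Fin L → Fin L → ℝ}

lemma scoreRange_nonneg (i : Fin M) : 0 ≤ scoreRange f i :=
  Real.sSup_nonneg <| by rintro _ ⟨_, _, _, _, rfl⟩; exact abs_nonneg _

lemma abs_sub_le_scoreRange {i : Fin M} (hf0 : ∀ k k', f i k 0 = f i k' 0) {k l : Fin L}
    (hkl : k ≠ l) (x : Fin (L + 1)) : |f i k x - f i l x| ≤ scoreRange f i := by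
  cases x using Fin.cases with
  | zero => rw [hf0 k l, sub_self, abs_zero]; exact scoreRange_nonneg i
  | succ h =>
    refine le_csSup (Set.Finite.bddAbove ?_) ⟨k, l, h, hkl, rfl⟩
    refine (Set.finite_range fun g : Fin L × Fin L × Fin L =>
      |f i g.1 g.2.2.succ - f i g.2.1 g.2.2.succ|).subset ?_
    rintro _ ⟨k, l, h, -, rfl⟩
    exact ⟨(k, l, h), rfl⟩

lemma scoreRange_le_maxScoreRange (i : Fin M) : scoreRange f i ≤ maxScoreRange f := by
  have hbdd : BddAbove {x : ℝ | ∃ (i : Fin M) (k l h : Fin L), k ≠ l ∧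
      x = |f i k h.succ - f i l h.succ|} := by
    refine (Set.finite_range fun g : Fin M × Fin L × Fin L × Fin L =>
      |f g.1 g.2.1 g.2.2.2.succ - f g.1 g.2.2.1 g.2.2.2.succ|).subset ?_ |>.bddAbove
    rintro _ ⟨i, k, l, h, -, rfl⟩
    exact ⟨(i, k, l, h), rfl⟩
  refine Real.sSup_le ?_ (Real.sSup_nonneg ?_)
  · rintro _ ⟨k, l, h, hkl, rfl⟩
    exact le_csSup hbdd ⟨i, k, l, h, hkl, rfl⟩
  · rintro _ ⟨_, _, _, _, _, rfl⟩
    exact abs_nonneg _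

lemma sum_sq_le_maxScoreVar (j : Fin N) {k l : Fin L} (hkl : k ≠ l) :
    ∑ i, ∑ h : Fin L, q i j * (f i k h.succ - f i l h.succ) ^ 2 * p i k h
      ≤ maxScoreVar f q p := by
  refine le_csSup ((Set.finite_range fun g : Fin N × Fin L × Fin L =>
    ∑ i, ∑ h : Fin L, q i g.1 * (f i g.2.1 h.succ - f i g.2.2 h.succ) ^ 2 * p i g.2.1 h).subset
      ?_).bddAbove ⟨j, k, l, hkl, rfl⟩
  rintro _ ⟨j, k, l, -, rfl⟩
  exact ⟨(j, k, l), rfl⟩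

lemma nbar_sq : nbar f ^ 2 = ∑ i, scoreRange f i ^ 2 :=
  Real.sq_sqrt (Finset.sum_nonneg fun _ _ => sq_nonneg _)

lemma maxScoreRange_pos (h : 0 < nbar f) : 0 < maxScoreRange f := by
  by_contra! h0
  have hzero (i : Fin M) : scoreRange f i = 0 :=
    le_antisymm ((scoreRange_le_maxScoreRange i).trans h0) (scoreRange_nonneg i)
  have h2 : nbar f ^ 2 = 0 := by simp [nbar_sq, hzero]
  exact h.ne' (pow_eq_zero_iff two_ne_zero |>.1 h2)

lemma gap_le_ttil_mul_nbar (hnbar : 0 < nbar f) (j : Fin N) {k l : Fin L} (hkl : k ≠ l) :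
    gap f a q p j k l ≤ ttil f a q p * nbar f := by
  have hτ : gap f a q p j k l / nbar f ≤ tauMax f a q p j := by
    refine le_csSup ((Set.finite_range fun g : Fin L × Fin L =>
      gap f a q p j g.1 g.2 / nbar f).subset ?_).bddAbove ⟨k, l, hkl, rfl⟩
    rintro _ ⟨k, l, -, rfl⟩
    exact ⟨(k, l), rfl⟩
  have ht : tauMax f a q p j ≤ ttil f a q p :=
    le_csSup ((Set.finite_range (tauMax f a q p)).subset (by rintro _ ⟨j, rfl⟩; exact ⟨j, rfl⟩)
      ).bddAbove ⟨j, rfl⟩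
  exact (div_le_iff₀ hnbar).1 (hτ.trans ht)

lemma nbar_pos_of_ttil_neg (ht : ttil f a q p < 0) : 0 < nbar f := by
  by_contra! hle
  have h0 : nbar f = 0 := le_antisymm hle (Real.sqrt_nonneg _)
  refine ht.ne ?_
  have hzero {s : Set ℝ} (hs : ∀ x ∈ s, x = 0) : sSup s = 0 :=
    le_antisymm (Real.sSup_nonpos fun x hx => (hs x hx).le)
      (Real.sSup_nonneg fun x hx => (hs x hx).ge)
  refine hzero ?_
  rintro _ ⟨j, rfl⟩
  refine hzero ?_
  rintro _ ⟨k, l, -, rfl⟩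
  rw [h0, div_zero]

end Suprema

def correctBound (f : Fin M → Fin L → Fin (L + 1) → ℝ) (a : Fin L → ℝ)
    (q : Fin M → Fin N → ℝ) (p : Fin M → Fin L → Fin L → ℝ) : ℝ :=
  min (exp (-(ttil f a q p) ^ 2 / 2))
    (exp (-(ttil f a q p) ^ 2 / (2 * (sigmaSq f q p - cConst f * ttil f a q p / 3))))

lemma sum_prod_condLaw_le_correctBound {f : Fin M → Fin L → Fin (L + 1) → ℝ} {a : Fin L → ℝ}
    {q : Fin M → Fin N → ℝ} {p : Fin M → Fin L → Fin L → ℝ} (hq0 : ∀ i j, 0 ≤ q i j)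
    (hq1 : ∀ i j, q i j ≤ 1) (hp0 : ∀ i k h, 0 ≤ p i k h) (hp1 : ∀ i k, ∑ h, p i k h = 1)
    (hf0 : ∀ i k k', f i k 0 = f i k' 0) (ht : ttil f a q p < 0) (j : Fin N) {k l : Fin L}
    (hkl : k ≠ l) :
    ∑ h ∈ Finset.univ.filter (fun h : Fin M → Fin (L + 1) =>
        a l - a k ≤ ∑ i, (f i k (h i) - f i l (h i))), ∏ i, condLaw q p i j k (h i)
      ≤ correctBound f a q p := by
  have hnbar := nbar_pos_of_ttil_neg ht
  obtain ⟨τ, hτdef⟩ : ∃ τ, τ = -ttil f a q p * nbar f := ⟨_, rfl⟩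
  have hτ : 0 < τ := hτdef ▸ mul_pos (neg_pos.2 ht) hnbar
  have hw0 (i : Fin M) := condLaw_nonneg hq0 hq1 hp0 i j k
  have hw1 (i : Fin M) := sum_condLaw (q := q) hp1 i j k
  have hD0 (i : Fin M) : f i k 0 - f i l 0 = 0 := by rw [hf0 i k l, sub_self]
  have hD0' (i : Fin M) : (f i k 0 - f i l 0) ^ 2 = 0 := by rw [hD0, sq, mul_zero]
  have hgap : ∑ i, ∑ x, condLaw q p i j k x * (f i k x - f i l x) + τ ≤ a l - a k := by
    rw [Finset.sum_congr rfl fun i _ =>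
      sum_condLaw_mul_of_map_zero (g := fun x => f i k x - f i l x) (hD0 i)]
    have := gap_le_ttil_mul_nbar (a := a) (q := q) (p := p) hnbar j hkl
    rw [gap] at this
    linarith
  have hvar : ∑ i, ∑ x, condLaw q p i j k x * (f i k x - f i l x) ^ 2 ≤ maxScoreVar f q p := by
    rw [Finset.sum_congr rfl fun i _ =>
      sum_condLaw_mul_of_map_zero (g := fun x => (f i k x - f i l x) ^ 2) (hD0' i)]
    exact sum_sq_le_maxScoreVar j hkl
  have hS : 0 < ∑ i, scoreRange f i ^ 2 := nbar_sq (f := f) ▸ by positivity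
  refine le_min ?_ ?_
  · refine (sum_filter_prod_le_hoeffding hw0 hw1 (fun i => abs_sub_le_scoreRange (hf0 i) hkl)
      hS hτ.le hgap).trans_eq ?_
    rw [← nbar_sq, hτdef]
    congr 1
    field_simp
  · have hC := maxScoreRange_pos hnbar
    refine (sum_filter_prod_le_bernstein hw0 hw1
      (fun i x => (abs_sub_le_scoreRange (hf0 i) hkl x).trans (scoreRange_le_maxScoreRange i))
      hC hvar hτ hgap).trans_eq ?_
    have hsig : sigmaSq f q p = maxScoreVar f q p / nbar f ^ 2 := one_div_mul_eq_div _ _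
    have hc : cConst f = maxScoreRange f / nbar f := one_div_mul_eq_div _ _
    rw [hsig, hc, hτdef]
    congr 1
    field_simp
    ring

lemma measureReal_correct_le {Ω : Type*} [MeasurableSpace Ω] {μ : Measure Ω}
    [IsProbabilityMeasure μ] (hL : 2 ≤ L) {y : Fin N → Ω → Fin L}
    {Z : Fin M → Fin N → Ω → Fin (L + 1)} (hym : ∀ j, Measurable (y j)) {pri : Fin L → ℝ}
    {q : Fin M → Fin N → ℝ} {p : Fin M → Fin L → Fin L → ℝ} (hpri : ∀ k, 0 ≤ pri k)
    (hq0 : ∀ i j, 0 ≤ q i j) (hq1 : ∀ i j, q i j ≤ 1) (hp0 : ∀ i k h, 0 ≤ p i k h)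
    (hp1 : ∀ i k, ∑ h, p i k h = 1)
    (hprior : ∀ (j : Fin N) (k : Fin L), (μ {ω | y j ω = k}).toReal = pri k)
    (hlaw : ∀ (j : Fin N) (k : Fin L) (h : Fin M → Fin (L + 1)),
      (μ {ω | y j ω = k ∧ ∀ i, Z i j ω = h i}).toReal = pri k * ∏ i, condLaw q p i j k (h i))
    {f : Fin M → Fin L → Fin (L + 1) → ℝ} (hf0 : ∀ i k k', f i k 0 = f i k' 0) {a : Fin L → ℝ}
    {yhat : Fin N → Ω → Fin L}
    (hyhat : ∀ (j : Fin N) (ω : Ω) (k : Fin L),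
      (∑ i, f i k (Z i j ω)) + a k ≤ (∑ i, f i (yhat j ω) (Z i j ω)) + a (yhat j ω))
    (ht : ttil f a q p < 0) (j : Fin N) :
    μ.real {ω | yhat j ω = y j ω} ≤ correctBound f a q p := by
  have : Nontrivial (Fin L) := Fin.nontrivial_iff_two_le.2 hL
  choose l hl using fun k : Fin L => exists_ne k
  -- on a correctly labelled item the true label `k` scores at least as high as `l k`
  let G (k : Fin L) := Finset.univ.filter fun h : Fin M → Fin (L + 1) =>
    a (l k) - a k ≤ ∑ i, (f i k (h i) - f i (l k) (h i))
  have hsub : {ω | yhat j ω = y j ω}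
      ⊆ ⋃ k, ⋃ h ∈ G k, {ω | y j ω = k ∧ ∀ i, Z i j ω = h i} := by
    intro ω hω
    have := hyhat j ω (l (y j ω))
    rw [show yhat j ω = y j ω from hω] at this
    refine Set.mem_iUnion.2 ⟨y j ω, Set.mem_iUnion₂.2 ⟨fun i => Z i j ω, ?_, rfl, fun i => rfl⟩⟩
    simp only [G, Finset.mem_filter, Finset.mem_univ, true_and, Finset.sum_sub_distrib]
    linarith
  have hpri1 : ∑ k, pri k = 1 := by
    have := sum_measureReal_preimage_singleton (μ := μ) Finset.univ
      fun k _ => hym j (measurableSet_singleton k)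
    simpa [Set.preimage, measureReal_def, hprior] using this
  calc μ.real {ω | yhat j ω = y j ω}
      ≤ ∑ k, ∑ h ∈ G k, μ.real {ω | y j ω = k ∧ ∀ i, Z i j ω = h i} :=
        (measureReal_mono hsub).trans <| (measureReal_iUnion_fintype_le _).trans <|
          Finset.sum_le_sum fun k _ => measureReal_biUnion_finset_le _ _
    _ = ∑ k, pri k * ∑ h ∈ G k, ∏ i, condLaw q p i j k (h i) := by
        simp_rw [Finset.mul_sum, measureReal_def, hlaw]
    _ ≤ ∑ k, pri k * correctBound f a q p := by
        gcongr with k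
        · exact hpri k
        · exact sum_prod_condLaw_le_correctBound hq0 hq1 hp0 hp1 hf0 ht j (hl k).symm
    _ = correctBound f a q p := by rw [← Finset.sum_mul, hpri1, one_mul]

end CrowdDS

theorem mean_error_rate_lower_bound_general
    {Ω : Type*} [MeasurableSpace Ω] (μ : Measure Ω) [IsProbabilityMeasure μ]
    {M N L : ℕ} (hN : 0 < N) (hL : 2 ≤ L)
    (y : Fin N → Ω → Fin L) (Z : Fin M → Fin N → Ω → Fin (L + 1))
    (hym : ∀ j, Measurable (y j))
    (pri : Fin L → ℝ) (q : Fin M → Fin N → ℝ) (p : Fin M → Fin L → Fin L → ℝ)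
    (hpri : ∀ k, 0 ≤ pri k) (hq0 : ∀ i j, 0 ≤ q i j) (hq1 : ∀ i j, q i j ≤ 1)
    (hp0 : ∀ i k h, 0 ≤ p i k h) (hp1 : ∀ i k, ∑ h, p i k h = 1)
    (hprior : ∀ (j : Fin N) (k : Fin L), (μ {ω | y j ω = k}).toReal = pri k)
    (hlaw : ∀ (j : Fin N) (k : Fin L) (h : Fin M → Fin (L + 1)),
      (μ {ω | y j ω = k ∧ ∀ i, Z i j ω = h i}).toReal
        = pri k * ∏ i, CrowdDS.condLaw q p i j k (h i))
    (f : Fin M → Fin L → Fin (L + 1) → ℝ) (hf0 : ∀ i k k', f i k 0 = f i k' 0)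
    (a : Fin L → ℝ)
    (yhat : Fin N → Ω → Fin L)
    (hyhat : ∀ (j : Fin N) (ω : Ω) (k : Fin L),
      (∑ i, f i k (Z i j ω)) + a k ≤ (∑ i, f i (yhat j ω) (Z i j ω)) + a (yhat j ω))
    (ht : CrowdDS.ttil f a q p ≤ 0) :
    1 - min
        (Real.exp (-(CrowdDS.ttil f a q p) ^ 2 / 2))
        (Real.exp (-(CrowdDS.ttil f a q p) ^ 2 /
          (2 * (CrowdDS.sigmaSq f q p - CrowdDS.cConst f * CrowdDS.ttil f a q p / 3))))
      ≤ (N : ℝ)⁻¹ * ∑ j, (μ {ω | yhat j ω ≠ y j ω}).toReal := by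
  change 1 - CrowdDS.correctBound f a q p ≤ _
  rcases ht.lt_or_eq with hneg | hzero
  · have herr (j : Fin N) : 1 - CrowdDS.correctBound f a q p ≤ μ.real {ω | yhat j ω = y j ω}ᶜ := by
      have hcover := measureReal_union_le (μ := μ) {ω | yhat j ω = y j ω} {ω | yhat j ω = y j ω}ᶜ
      rw [Set.union_compl_self, probReal_univ] at hcover
      linarith [CrowdDS.measureReal_correct_le hL hym hpri hq0 hq1 hp0 hp1 hprior hlaw hf0 hyhat
        hneg j]
    rw [le_inv_mul_iff₀ (Nat.cast_pos.2 hN)]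
    have := Finset.card_nsmul_le_sum Finset.univ _ _ fun j _ => herr j
    rwa [Finset.card_univ, Fintype.card_fin, nsmul_eq_mul] at this
  · rw [CrowdDS.correctBound, hzero]
    norm_num
    positivity

/-- Under the general Dawid–Skene model with a decomposable aggregation
rule: if `t̃ ≤ 0`, then the mean error rate satisfies
`E[E_N] ≥ 1 − min{exp(−t̃²/2), exp(−t̃²/(2(σ² − c·t̃/3)))}`. -/
theorem mean_error_rate_lower_bound
    {Ω : Type*} [MeasurableSpace Ω] (μ : Measure Ω) [IsProbabilityMeasure μ]
    {M N L : ℕ} (hM : 0 < M) (hN : 0 < N) (hL : 2 ≤ L)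
    (y : Fin N → Ω → Fin L) (Z : Fin M → Fin N → Ω → Fin (L + 1))
    (hym : ∀ j, Measurable (y j)) (hZm : ∀ i j, Measurable (Z i j))
    (pri : Fin L → ℝ) (q : Fin M → Fin N → ℝ) (p : Fin M → Fin L → Fin L → ℝ)
    (hpri : ∀ k, 0 ≤ pri k) (hq0 : ∀ i j, 0 ≤ q i j) (hq1 : ∀ i j, q i j ≤ 1)
    (hp0 : ∀ i k h, 0 ≤ p i k h) (hp1 : ∀ i k, ∑ h, p i k h = 1)
    (hprior : ∀ (j : Fin N) (k : Fin L), (μ {ω | y j ω = k}).toReal = pri k)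
    (hlaw : ∀ (j : Fin N) (k : Fin L) (h : Fin M → Fin (L + 1)),
      (μ {ω | y j ω = k ∧ ∀ i, Z i j ω = h i}).toReal
        = pri k * ∏ i, CrowdDS.condLaw q p i j k (h i))
    (hindep : iIndepFun (fun j ω => (y j ω, fun i => Z i j ω)) μ)
    (f : Fin M → Fin L → Fin (L + 1) → ℝ) (hf0 : ∀ i k k', f i k 0 = f i k' 0)
    (a : Fin L → ℝ)
    (yhat : Fin N → Ω → Fin L) (hyhatm : ∀ j, Measurable (yhat j))
    (hyhat : ∀ (j : Fin N) (ω : Ω) (k : Fin L),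
      (∑ i, f i k (Z i j ω)) + a k ≤ (∑ i, f i (yhat j ω) (Z i j ω)) + a (yhat j ω))
    (ht : CrowdDS.ttil f a q p ≤ 0) :
    1 - min
        (Real.exp (-(CrowdDS.ttil f a q p) ^ 2 / 2))
        (Real.exp (-(CrowdDS.ttil f a q p) ^ 2 /
          (2 * (CrowdDS.sigmaSq f q p - CrowdDS.cConst f * CrowdDS.ttil f a q p / 3))))
      ≤ (N : ℝ)⁻¹ * ∑ j, (μ {ω | yhat j ω ≠ y j ω}).toReal :=
  mean_error_rate_lower_bound_general μ hN hL y Z hym pri q p hpri hq0 hq1 hp0 hp1 hprior hlaw f hf0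
    a yhat hyhat ht
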